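/- arXiv:1303.6406 — 2 statements merged into one kernel-verified Lean document; each statement's English description precedes it below -/
import Mathlib

section
/- Let r be a positive integer. For each α ∈ Δ set r_α = r / gcd(r, d_α) and α' = r_α α. Then Δ' = {α' : α ∈ Δ} is a reduced crystallographic root system in V whose Weyl group equals W, the set {α_i' : α_i ∈ Π} is a base of Δ', and {α' : α ∈ Δ⁺} is the corresponding set of positive roots of Δ'. -/
/-!
Rescaling every root by a positive factor that depends only on its length leaves each reflection
`s_α` unchanged, so `Δ'` is again a reduced root system, with the same Weyl group. Integrality of
`⟨β', α'^∨⟩ = (r_β / r_α) ⟨β, α^∨⟩` comes from `d_α ⟨β, α^∨⟩ = d_β ⟨α, β^∨⟩`: it forces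
`gcd(r, d_β) ∣ gcd(r, d_α) ⟨β, α^∨⟩`.

For the base, induction on height shows that every positive root is obtained from a simple root
by steps `γ ↦ s_α γ = γ + n α` with `α` simple and `n = -⟨γ, α^∨⟩ > 0`. Since `f` commutes with
reflections, `f (s_α γ) = f γ + n' f α` with `n' = -⟨f γ, (f α)^∨⟩` a positive integer, so `f(Δ⁺)`
lies in the `ℕ`-span of `f(Π)`; pointedness of that cone then identifies the positive systems.
-/

open scoped Pointwise

namespace ZetaCenter

variable {V : Type*} [AddCommGroup V] [Module ℚ V]

/-- The coroot `α^∨ = 2α/(α,α)` of a vector `α` with respect to a bilinear form. -/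
noncomputable def coroot (B : V →ₗ[ℚ] V →ₗ[ℚ] ℚ) (α : V) : V :=
  (2 / B α α) • α

/-- `Δ` is a (crystallographic-style) root system in `V` with respect to `B`:
finite, not containing `0`, spanning `V`, and closed under the reflections `s_α`. -/
def IsRootSystem (B : V →ₗ[ℚ] V →ₗ[ℚ] ℚ) (Δ : Set V) : Prop :=
  Δ.Finite ∧ (0 : V) ∉ Δ ∧ Submodule.span ℚ Δ = ⊤ ∧
    ∀ α ∈ Δ, ∀ β ∈ Δ, β - B β (coroot B α) • α ∈ Δ

/-- Crystallographic condition: all pairings `(β, α^∨)` are integers. -/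
def IsCrystallographic (B : V →ₗ[ℚ] V →ₗ[ℚ] ℚ) (Δ : Set V) : Prop :=
  ∀ α ∈ Δ, ∀ β ∈ Δ, ∃ n : ℤ, B β (coroot B α) = n

/-- Reducedness: the only multiples of a root that are roots are `±` itself. -/
def IsReduced (Δ : Set V) : Prop :=
  ∀ α ∈ Δ, ∀ c : ℚ, c • α ∈ Δ → c = 1 ∨ c = -1

/-- Irreducibility: `Δ` admits no decomposition into two orthogonal nonempty parts. -/
def IsIrreducible (B : V →ₗ[ℚ] V →ₗ[ℚ] ℚ) (Δ : Set V) : Prop :=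
  Δ.Nonempty ∧ ∀ Δ₁ Δ₂ : Set V, Δ = Δ₁ ∪ Δ₂ →
    (∀ α ∈ Δ₁, ∀ β ∈ Δ₂, B α β = 0) → Δ₁ = ∅ ∨ Δ₂ = ∅

/-- The Weyl group of `Δ`: the subgroup of `GL(V)` generated by the reflections `s_α`, `α ∈ Δ`. -/
def weylGroup (B : V →ₗ[ℚ] V →ₗ[ℚ] ℚ) (Δ : Set V) : Subgroup (V ≃ₗ[ℚ] V) :=
  Subgroup.closure {w | ∃ α ∈ Δ, ∀ v : V, w v = v - B v (coroot B α) • α}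

/-- `Pi` is a base (set of simple roots) of `Δ`: a linearly independent subset such that every
root is a nonnegative-integral or nonpositive-integral combination of elements of `Pi`. -/
def IsBase (Δ Pi : Set V) : Prop :=
  Pi ⊆ Δ ∧ LinearIndependent ℚ ((↑) : Pi → V) ∧
    ∀ α ∈ Δ, α ∈ AddSubmonoid.closure Pi ∨ -α ∈ AddSubmonoid.closure Pi

/-- The positive system corresponding to the base `Pi`. -/
def positiveRoots (Δ Pi : Set V) : Set V :=
  {α | α ∈ Δ ∧ α ∈ AddSubmonoid.closure Pi}

/-- `β` is a short root of `Δ`. -/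
def IsShort (B : V →ₗ[ℚ] V →ₗ[ℚ] ℚ) (Δ : Set V) (β : V) : Prop :=
  β ∈ Δ ∧ ∀ γ ∈ Δ, B β β ≤ B γ γ

/-- The lattice `{λ ∈ V : (λ, α^∨) ∈ c(α)·ℤ for all α ∈ Δ}`. -/
noncomputable def scaledWeightLattice (B : V →ₗ[ℚ] V →ₗ[ℚ] ℚ) (Δ : Set V) (c : V → ℚ) :
    AddSubgroup V where
  carrier := {lam | ∀ α ∈ Δ, ∃ n : ℤ, B lam (coroot B α) = c α * n}
  zero_mem' := fun α _ => ⟨0, by simp⟩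
  add_mem' := by
    intro x y hx hy α hα
    obtain ⟨m, hm⟩ := hx α hα
    obtain ⟨k, hk⟩ := hy α hα
    exact ⟨m + k, by rw [map_add, LinearMap.add_apply, hm, hk]; push_cast; ring⟩
  neg_mem' := by
    intro x hx α hα
    obtain ⟨m, hm⟩ := hx α hα
    exact ⟨-m, by rw [map_neg, LinearMap.neg_apply, hm]; push_cast; ring⟩

/-- The weight lattice `P` of `Δ`. -/
noncomputable def weightLattice (B : V →ₗ[ℚ] V →ₗ[ℚ] ℚ) (Δ : Set V) : AddSubgroup V :=
  scaledWeightLattice B Δ fun _ => 1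

/-- The coroot lattice `Q^∨` of `Δ`. -/
noncomputable def corootLattice (B : V →ₗ[ℚ] V →ₗ[ℚ] ℚ) (Δ : Set V) : AddSubgroup V :=
  AddSubgroup.closure (coroot B '' Δ)

lemma div_gcd_dvd_div_gcd_mul {r a b : ℕ} (hr : 0 < r) {n m : ℤ} (h : (a : ℤ) * n = b * m) :
    ((r / r.gcd a : ℕ) : ℤ) ∣ ((r / r.gcd b : ℕ) : ℤ) * n := by
  set ga := r.gcd a
  set gb := r.gcd b
  have hgb : (gb : ℤ) ∣ ga * n := by
    have hrn : (gb : ℤ) ∣ r * n := (Int.natCast_dvd_natCast.mpr (r.gcd_dvd_left b)).mul_right n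
    have han : (gb : ℤ) ∣ a * n := h ▸ (Int.natCast_dvd_natCast.mpr (r.gcd_dvd_right b)).mul_right m
    have := Int.dvd_gcd hrn han
    rw [Int.gcd_mul_right, Int.gcd_natCast_natCast] at this
    rwa [Int.natCast_dvd, Int.natAbs_mul, Int.natAbs_natCast]
  obtain ⟨t, ht⟩ := hgb
  refine ⟨t, mul_left_cancel₀ (show (ga : ℤ) * gb ≠ 0 by positivity) ?_⟩
  have hra : ((r / ga : ℕ) : ℤ) * ga = r := mod_cast Nat.div_mul_cancel (r.gcd_dvd_left a)
  have hrb : ((r / gb : ℕ) : ℤ) * gb = r := mod_cast Nat.div_mul_cancel (r.gcd_dvd_left b)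
  linear_combination (ga * n : ℤ) * hrb - (gb * t : ℤ) * hra + (r : ℤ) * ht

variable (B : V →ₗ[ℚ] V →ₗ[ℚ] ℚ)

lemma coroot_smul {c : ℚ} (hc : c ≠ 0) {α : V} (hα : B α α ≠ 0) :
    coroot B (c • α) = c⁻¹ • coroot B α := by
  simp only [coroot, map_smul, LinearMap.smul_apply, smul_eq_mul, smul_smul]
  congr 1
  field_simp

lemma pairing_coroot_smul_smul {c : ℚ} (hc : c ≠ 0) {α : V} (hα : B α α ≠ 0) (v : V) :
    B v (coroot B (c • α)) • (c • α) = B v (coroot B α) • α := by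
  rw [coroot_smul B hc hα, map_smul, smul_eq_mul, smul_smul, mul_right_comm,
    inv_mul_cancel₀ hc, one_mul]

lemma pairing_coroot_self {α : V} (hα : B α α ≠ 0) : B α (coroot B α) = 2 := by
  rw [coroot, map_smul, smul_eq_mul, div_mul_cancel₀ 2 hα]

lemma pairing_coroot_mul_self {α : V} (hα : B α α ≠ 0) (v : V) :
    B v (coroot B α) * B α α = 2 * B v α := by
  rw [coroot, map_smul, smul_eq_mul]
  field_simp

lemma norm_reflection (hsymm : ∀ x y : V, B x y = B y x) {α : V} (hα : B α α ≠ 0) (β : V) :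
    B (β - B β (coroot B α) • α) (β - B β (coroot B α) • α) = B β β := by
  have hs := hsymm α β
  simp only [coroot, map_sub, map_smul, LinearMap.sub_apply, LinearMap.smul_apply, smul_eq_mul]
  field_simp
  rw [hs]
  ring

variable {B}

section Cone

variable {ι : Type*} (b : Module.Basis ι ℚ V)

lemma repr_nonneg_of_mem_closure {x : V} (hx : x ∈ AddSubmonoid.closure (Set.range b)) (i : ι) :
    0 ≤ b.repr x i := by
  classical
  induction hx using AddSubmonoid.closure_induction with
  | mem _ hy =>
    obtain ⟨j, rfl⟩ := hy
    rw [b.repr_self, Finsupp.single_apply]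
    split_ifs <;> norm_num
  | zero => simp
  | add _ _ _ _ hx hy => simpa using add_nonneg hx hy

lemma exists_sumCoords_eq_natCast {x : V} (hx : x ∈ AddSubmonoid.closure (Set.range b)) :
    ∃ k : ℕ, b.sumCoords x = k := by
  induction hx using AddSubmonoid.closure_induction with
  | mem _ hy =>
    obtain ⟨j, rfl⟩ := hy
    exact ⟨1, by simp⟩
  | zero => exact ⟨0, by simp⟩
  | add _ _ _ _ hx hy =>
    obtain ⟨k, hk⟩ := hx
    obtain ⟨l, hl⟩ := hy
    exact ⟨k + l, by rw [map_add, hk, hl, Nat.cast_add]⟩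

lemma eq_zero_of_mem_closure_of_neg_mem_closure {x : V}
    (hx : x ∈ AddSubmonoid.closure (Set.range b)) (hnx : -x ∈ AddSubmonoid.closure (Set.range b)) :
    x = 0 := by
  refine b.ext_elem_iff.mpr fun i => le_antisymm ?_ ?_
  · simpa using repr_nonneg_of_mem_closure b hnx i
  · simpa using repr_nonneg_of_mem_closure b hx i

lemma eq_smul_of_add_eq_smul {x y : V} (hx : x ∈ AddSubmonoid.closure (Set.range b))
    (hy : y ∈ AddSubmonoid.closure (Set.range b)) {t : ℚ} {i : ι} (h : x + y = t • b i) :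
    x = b.repr x i • b i := by
  classical
  refine b.ext_elem_iff.mpr fun j => ?_
  rw [map_smul, b.repr_self, Finsupp.smul_apply, Finsupp.single_apply]
  split_ifs with hij
  · rw [hij, smul_eq_mul, mul_one]
  · have hsum := congrArg (fun v => b.repr v j) h
    simp only [map_add, Finsupp.add_apply, map_smul, b.repr_self, Finsupp.smul_apply,
      Finsupp.single_apply, if_neg hij, smul_zero] at hsum
    rw [smul_zero]
    linarith [repr_nonneg_of_mem_closure b hx j, repr_nonneg_of_mem_closure b hy j]

end Cone

section RootSystem

variable {Δ Pi : Set V}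

lemma IsRootSystem.pairing_self_pos (hpos : ∀ v : V, v ≠ 0 → 0 < B v v)
    (hRS : IsRootSystem B Δ) {α : V} (hα : α ∈ Δ) : 0 < B α α :=
  hpos α fun h => hRS.2.1 (h ▸ hα)

lemma IsRootSystem.neg_mem (hpos : ∀ v : V, v ≠ 0 → 0 < B v v) (hRS : IsRootSystem B Δ)
    {α : V} (hα : α ∈ Δ) : -α ∈ Δ := by
  have h := hRS.2.2.2 α hα α hα
  rwa [pairing_coroot_self B (hRS.pairing_self_pos hpos hα).ne', two_smul, sub_add_cancel_left]
    at h

lemma IsBase.exists_basis (hspan : Submodule.span ℚ Δ = ⊤) (hbase : IsBase Δ Pi) :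
    ∃ b : Module.Basis Pi ℚ V, Set.range b = Pi := by
  have hcl : AddSubmonoid.closure Pi ≤ (Submodule.span ℚ Pi).toAddSubmonoid :=
    AddSubmonoid.closure_le.mpr Submodule.subset_span
  have hsp : ⊤ ≤ Submodule.span ℚ (Set.range ((↑) : Pi → V)) := by
    rw [Subtype.range_coe, ← hspan, Submodule.span_le]
    intro α hα
    rcases hbase.2.2 α hα with h | h
    · exact hcl h
    · simpa using Submodule.neg_mem _ (hcl h)
  exact ⟨Module.Basis.mk hbase.2.1 hsp, by rw [Module.Basis.coe_mk, Subtype.range_coe]⟩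

lemma IsBase.eq_zero_of_mem_closure_of_neg_mem_closure (hspan : Submodule.span ℚ Δ = ⊤)
    (hbase : IsBase Δ Pi) {x : V} (hx : x ∈ AddSubmonoid.closure Pi)
    (hnx : -x ∈ AddSubmonoid.closure Pi) : x = 0 := by
  obtain ⟨b, hb⟩ := hbase.exists_basis hspan
  rw [← hb] at hx hnx
  exact ZetaCenter.eq_zero_of_mem_closure_of_neg_mem_closure b hx hnx

lemma exists_simple_pairing_pos (hpos : ∀ v : V, v ≠ 0 → 0 < B v v) {γ : V}
    (hγ : γ ∈ AddSubmonoid.closure Pi) (hγ0 : γ ≠ 0) : ∃ α ∈ Pi, 0 < B γ α := by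
  by_contra! hneg
  have hle : ∀ x ∈ AddSubmonoid.closure Pi, B γ x ≤ 0 := by
    intro x hx
    induction hx using AddSubmonoid.closure_induction with
    | mem α hα => exact hneg α hα
    | zero => simp
    | add _ _ _ _ hx hy => rw [map_add]; linarith
  linarith [hle γ hγ, hpos γ hγ0]

lemma sub_smul_mem_closure (hRS : IsRootSystem B Δ) (hred : IsReduced Δ) (hbase : IsBase Δ Pi)
    {α γ : V} (hα : α ∈ Pi) (hγ : γ ∈ positiveRoots Δ Pi) (hγα : γ ≠ α) {t : ℚ}
    (ht : γ - t • α ∈ Δ) : γ - t • α ∈ AddSubmonoid.closure Pi := by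
  refine (hbase.2.2 _ ht).resolve_right fun hneg => ?_
  obtain ⟨b, hb⟩ := hbase.exists_basis hRS.2.2.1
  rw [← hb] at hα hneg
  obtain ⟨i, rfl⟩ := hα
  have hγb : γ ∈ AddSubmonoid.closure (Set.range b) := by rw [hb]; exact hγ.2
  have hbi : b i ∈ Δ := hbase.1 (hb.subset (Set.mem_range_self i))
  have hγi := eq_smul_of_add_eq_smul b hγb hneg (t := t) (by abel)
  rcases hred (b i) hbi _ (hγi ▸ hγ.1) with h | h
  · exact hγα (by rw [hγi, h, one_smul])
  · have hγneg : γ = -b i := by rw [hγi, h, neg_one_smul]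
    have hbi_cl : b i ∈ AddSubmonoid.closure (Set.range b) := AddSubmonoid.subset_closure ⟨i, rfl⟩
    exact hRS.2.1 (eq_zero_of_mem_closure_of_neg_mem_closure b hbi_cl (hγneg ▸ hγb) ▸ hbi)

lemma exists_simple_reflection_eq (hpos : ∀ v : V, v ≠ 0 → 0 < B v v) (hRS : IsRootSystem B Δ)
    (hred : IsReduced Δ) (hbase : IsBase Δ Pi) {γ : V} (hγ : γ ∈ positiveRoots Δ Pi)
    (hγPi : γ ∉ Pi) :
    ∃ α ∈ Pi, ∃ γ' ∈ positiveRoots Δ Pi, B γ' (coroot B α) < 0 ∧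
      γ = γ' - B γ' (coroot B α) • α := by
  obtain ⟨α, hα, hγα⟩ := exists_simple_pairing_pos hpos hγ.2 fun h => hRS.2.1 (h ▸ hγ.1)
  have hαΔ := hbase.1 hα
  have hαα := hRS.pairing_self_pos hpos hαΔ
  set n := B γ (coroot B α)
  have hn : 0 < n := by
    simp only [n, coroot, map_smul, smul_eq_mul]
    positivity
  have hγ'Δ : γ - n • α ∈ Δ := hRS.2.2.2 α hαΔ γ hγ.1
  have hpair : B (γ - n • α) (coroot B α) = -n := by
    simp only [map_sub, map_smul, LinearMap.sub_apply, LinearMap.smul_apply, smul_eq_mul,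
      pairing_coroot_self B hαα.ne']
    ring
  refine ⟨α, hα, γ - n • α,
    ⟨hγ'Δ, sub_smul_mem_closure hRS hred hbase hα hγ (fun h => hγPi (h ▸ hα)) hγ'Δ⟩, ?_, ?_⟩
  · rw [hpair]
    linarith
  · rw [hpair, neg_smul, sub_neg_eq_add, sub_add_cancel]

theorem positiveRoots_induction (hpos : ∀ v : V, v ≠ 0 → 0 < B v v) (hRS : IsRootSystem B Δ)
    (hred : IsReduced Δ) (hbase : IsBase Δ Pi) {P : V → Prop} (hsimple : ∀ α ∈ Pi, P α)
    (hstep : ∀ α ∈ Pi, ∀ γ ∈ positiveRoots Δ Pi, B γ (coroot B α) < 0 → P γ →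
      P (γ - B γ (coroot B α) • α)) :
    ∀ γ ∈ positiveRoots Δ Pi, P γ := by
  obtain ⟨b, hb⟩ := hbase.exists_basis hRS.2.2.1
  suffices ∀ k : ℕ, ∀ γ ∈ positiveRoots Δ Pi, b.sumCoords γ = k → P γ by
    intro γ hγ
    obtain ⟨k, hk⟩ := exists_sumCoords_eq_natCast b (hb ▸ hγ.2)
    exact this k γ hγ hk
  intro k
  induction k using Nat.strong_induction_on with
  | _ k ih =>
    intro γ hγ hk
    by_cases hγPi : γ ∈ Pi
    · exact hsimple γ hγPi
    obtain ⟨α, hα, γ', hγ', hneg, rfl⟩ := exists_simple_reflection_eq hpos hRS hred hbase hγ hγPi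
    obtain ⟨k', hk'⟩ := exists_sumCoords_eq_natCast b (hb ▸ hγ'.2)
    obtain ⟨i, rfl⟩ := hb ▸ hα
    have hlt : (k' : ℚ) < k := by
      rw [← hk, ← hk', map_sub, map_smul, b.sumCoords_self_apply, smul_eq_mul, mul_one]
      linarith
    exact hstep _ hα γ' hγ' hneg (ih k' (mod_cast hlt) γ' hγ' hk')

end RootSystem

def rescale (c : V → ℚ) (α : V) : V :=
  c α • α

section Rescale

variable {Δ Pi : Set V} {c : V → ℚ}

lemma pairing_coroot_rescale {α : V} (hcα : c α ≠ 0) (hα : B α α ≠ 0) (β : V) :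
    B (rescale c β) (coroot B (rescale c α)) = c β / c α * B β (coroot B α) := by
  simp only [rescale, coroot_smul B hcα hα, map_smul, LinearMap.smul_apply, smul_eq_mul]
  ring

lemma rescale_reflection (hsymm : ∀ x y : V, B x y = B y x) (hpos : ∀ v : V, v ≠ 0 → 0 < B v v)
    (hRS : IsRootSystem B Δ) (hc : ∀ α ∈ Δ, 0 < c α)
    (hc_len : ∀ α ∈ Δ, ∀ β ∈ Δ, B α α = B β β → c α = c β) {α β : V} (hα : α ∈ Δ)
    (hβ : β ∈ Δ) :
    rescale c β - B (rescale c β) (coroot B (rescale c α)) • rescale c α =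
      rescale c (β - B β (coroot B α) • α) := by
  have hαα := (hRS.pairing_self_pos hpos hα).ne'
  have hcβ : c (β - B β (coroot B α) • α) = c β :=
    hc_len _ (hRS.2.2.2 α hα β hβ) β hβ (norm_reflection B hsymm hαα β)
  rw [rescale, rescale, rescale, hcβ, map_smul, LinearMap.smul_apply, smul_eq_mul, mul_smul,
    pairing_coroot_smul_smul B (hc α hα).ne' hαα, smul_sub]

lemma rescale_neg (hpos : ∀ v : V, v ≠ 0 → 0 < B v v) (hRS : IsRootSystem B Δ)
    (hc_len : ∀ α ∈ Δ, ∀ β ∈ Δ, B α α = B β β → c α = c β) {α : V} (hα : α ∈ Δ) :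
    rescale c (-α) = -rescale c α := by
  rw [rescale, rescale, hc_len _ (hRS.neg_mem hpos hα) α hα (by simp), smul_neg]

lemma isRootSystem_rescale (hsymm : ∀ x y : V, B x y = B y x)
    (hpos : ∀ v : V, v ≠ 0 → 0 < B v v) (hRS : IsRootSystem B Δ) (hc : ∀ α ∈ Δ, 0 < c α)
    (hc_len : ∀ α ∈ Δ, ∀ β ∈ Δ, B α α = B β β → c α = c β) :
    IsRootSystem B (rescale c '' Δ) := by
  refine ⟨hRS.1.image _, ?_, ?_, ?_⟩
  · rintro ⟨α, hα, hα0⟩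
    exact hRS.2.1 (((smul_eq_zero.mp hα0).resolve_left (hc α hα).ne') ▸ hα)
  · rw [eq_top_iff, ← hRS.2.2.1, Submodule.span_le]
    intro α hα
    have : α = (c α)⁻¹ • rescale c α := by rw [rescale, inv_smul_smul₀ (hc α hα).ne']
    rw [this]
    exact Submodule.smul_mem _ _ (Submodule.subset_span ⟨α, hα, rfl⟩)
  · rintro _ ⟨α, hα, rfl⟩ _ ⟨β, hβ, rfl⟩
    rw [rescale_reflection hsymm hpos hRS hc hc_len hα hβ]
    exact ⟨_, hRS.2.2.2 α hα β hβ, rfl⟩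

lemma isReduced_rescale (hred : IsReduced Δ) (hc : ∀ α ∈ Δ, 0 < c α)
    (hc_len : ∀ α ∈ Δ, ∀ β ∈ Δ, B α α = B β β → c α = c β) :
    IsReduced (rescale c '' Δ) := by
  rintro _ ⟨α, hα, rfl⟩ t ⟨β, hβ, hβt⟩
  have hcα := (hc α hα).ne'
  set s := (c β)⁻¹ * (t * c α)
  have hβs : β = s • α := by
    rw [rescale, rescale, smul_smul] at hβt
    rw [mul_smul, ← hβt, inv_smul_smul₀ (hc β hβ).ne']
  have hs := hred α hα s (hβs ▸ hβ)
  have hcβ : c β = c α := hc_len β hβ α hα (by rcases hs with h | h <;> simp [hβs, h])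
  rwa [show s = t by simp only [s, hcβ]; field_simp] at hs

lemma weylGroup_rescale (hpos : ∀ v : V, v ≠ 0 → 0 < B v v) (hRS : IsRootSystem B Δ)
    (hc : ∀ α ∈ Δ, 0 < c α) :
    weylGroup B (rescale c '' Δ) = weylGroup B Δ := by
  have hrefl : ∀ α ∈ Δ, ∀ v : V, B v (coroot B (rescale c α)) • rescale c α =
      B v (coroot B α) • α := fun α hα =>
    pairing_coroot_smul_smul B (hc α hα).ne' (hRS.pairing_self_pos hpos hα).ne'
  unfold weylGroup
  congr 1
  ext w
  constructor
  · rintro ⟨_, ⟨α, hα, rfl⟩, hw⟩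
    exact ⟨α, hα, fun v => by rw [hw v, hrefl α hα v]⟩
  · rintro ⟨α, hα, hw⟩
    exact ⟨rescale c α, ⟨α, hα, rfl⟩, fun v => by rw [hw v, hrefl α hα v]⟩

lemma injOn_rescale (hred : IsReduced Δ) (hc : ∀ α ∈ Δ, 0 < c α) : Set.InjOn (rescale c) Δ := by
  intro α hα β hβ h
  have hβα : β = ((c β)⁻¹ * c α) • α := by
    rw [mul_smul, ← rescale, h, rescale, inv_smul_smul₀ (hc β hβ).ne']
  rcases hred α hα _ (hβα ▸ hβ) with h1 | h1
  · rw [hβα, h1, one_smul]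
  · have : 0 < (c β)⁻¹ * c α := mul_pos (inv_pos.mpr (hc β hβ)) (hc α hα)
    linarith

lemma rescale_mem_closure (hsymm : ∀ x y : V, B x y = B y x)
    (hpos : ∀ v : V, v ≠ 0 → 0 < B v v) (hRS : IsRootSystem B Δ) (hred : IsReduced Δ)
    (hbase : IsBase Δ Pi) (hc : ∀ α ∈ Δ, 0 < c α)
    (hc_len : ∀ α ∈ Δ, ∀ β ∈ Δ, B α α = B β β → c α = c β)
    (hcrys : IsCrystallographic B (rescale c '' Δ)) :
    ∀ γ ∈ positiveRoots Δ Pi, rescale c γ ∈ AddSubmonoid.closure (rescale c '' Pi) := by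
  refine positiveRoots_induction hpos hRS hred hbase
    (fun α hα => AddSubmonoid.subset_closure ⟨α, hα, rfl⟩) fun α hα γ hγ hneg hγcl => ?_
  have hαΔ := hbase.1 hα
  rw [← rescale_reflection hsymm hpos hRS hc hc_len hαΔ hγ.1]
  obtain ⟨z, hz⟩ := hcrys _ ⟨α, hαΔ, rfl⟩ _ ⟨γ, hγ.1, rfl⟩
  have hz_neg : (z : ℚ) < 0 := by
    rw [← hz, pairing_coroot_rescale (hc α hαΔ).ne' (hRS.pairing_self_pos hpos hαΔ).ne']
    exact mul_neg_of_pos_of_neg (div_pos (hc γ hγ.1) (hc α hαΔ)) hneg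
  obtain ⟨m, rfl⟩ := Int.exists_eq_neg_ofNat (by exact_mod_cast hz_neg.le : z ≤ 0)
  rw [hz, Int.cast_neg, Int.cast_natCast, neg_smul, sub_neg_eq_add, Nat.cast_smul_eq_nsmul]
  exact add_mem hγcl (nsmul_mem (AddSubmonoid.subset_closure (Set.mem_image_of_mem _ hα)) m)

lemma isBase_rescale (hsymm : ∀ x y : V, B x y = B y x)
    (hpos : ∀ v : V, v ≠ 0 → 0 < B v v) (hRS : IsRootSystem B Δ) (hred : IsReduced Δ)
    (hbase : IsBase Δ Pi) (hc : ∀ α ∈ Δ, 0 < c α)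
    (hc_len : ∀ α ∈ Δ, ∀ β ∈ Δ, B α α = B β β → c α = c β)
    (hcrys : IsCrystallographic B (rescale c '' Δ)) :
    IsBase (rescale c '' Δ) (rescale c '' Pi) := by
  have hmem := rescale_mem_closure hsymm hpos hRS hred hbase hc hc_len hcrys
  refine ⟨Set.image_mono hbase.1, ?_, ?_⟩
  · have hli : LinearIndepOn ℚ (rescale c) Pi :=
      hbase.2.1.units_smul fun α : Pi => Units.mk0 (c α) (hc α (hbase.1 α.2)).ne'
    exact (linearIndepOn_iff_image ((injOn_rescale hred hc).mono hbase.1)).mp hli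
  · rintro _ ⟨α, hα, rfl⟩
    refine (hbase.2.2 α hα).imp (fun h => hmem α ⟨hα, h⟩) fun h => ?_
    rw [← rescale_neg hpos hRS hc_len hα]
    exact hmem _ ⟨hRS.neg_mem hpos hα, h⟩

lemma positiveRoots_rescale (hsymm : ∀ x y : V, B x y = B y x)
    (hpos : ∀ v : V, v ≠ 0 → 0 < B v v) (hRS : IsRootSystem B Δ) (hred : IsReduced Δ)
    (hbase : IsBase Δ Pi) (hc : ∀ α ∈ Δ, 0 < c α)
    (hc_len : ∀ α ∈ Δ, ∀ β ∈ Δ, B α α = B β β → c α = c β)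
    (hcrys : IsCrystallographic B (rescale c '' Δ)) :
    positiveRoots (rescale c '' Δ) (rescale c '' Pi) = rescale c '' positiveRoots Δ Pi := by
  have hmem := rescale_mem_closure hsymm hpos hRS hred hbase hc hc_len hcrys
  have hRS' := isRootSystem_rescale hsymm hpos hRS hc hc_len
  ext x
  constructor
  · rintro ⟨⟨α, hα, rfl⟩, hcl⟩
    refine ⟨α, ⟨hα, (hbase.2.2 α hα).resolve_right fun hneg => ?_⟩, rfl⟩
    have hncl := hmem _ ⟨hRS.neg_mem hpos hα, hneg⟩
    rw [rescale_neg hpos hRS hc_len hα] at hncl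
    have := (isBase_rescale hsymm hpos hRS hred hbase hc hc_len
      hcrys).eq_zero_of_mem_closure_of_neg_mem_closure hRS'.2.2.1 hcl hncl
    exact hRS'.2.1 (this ▸ ⟨α, hα, rfl⟩)
  · rintro ⟨α, hα, rfl⟩
    exact ⟨⟨α, hα.1, rfl⟩, hmem α hα⟩

end Rescale

/-- The paper's `r_α = r / gcd(r, d_α)`. -/
def scalingFactor (r : ℕ) (d_ : V → ℕ) (α : V) : ℚ :=
  ((r / Nat.gcd r (d_ α) : ℕ) : ℚ)

section ScalingFactor

variable {Δ : Set V} {d_ : V → ℕ} {r : ℕ}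

lemma scalingFactor_eq_of_norm_eq (hpos : ∀ v : V, v ≠ 0 → 0 < B v v) (hRS : IsRootSystem B Δ)
    (hd : ∀ α ∈ Δ, ∀ β ∈ Δ, (d_ α : ℚ) * B β β = d_ β * B α α) {α β : V} (hα : α ∈ Δ)
    (hβ : β ∈ Δ) (hαβ : B α α = B β β) : scalingFactor r d_ α = scalingFactor r d_ β := by
  have hdαβ : d_ α = d_ β := by
    have := hd α hα β hβ
    rw [hαβ] at this
    exact_mod_cast mul_right_cancel₀ (hRS.pairing_self_pos hpos hβ).ne' this
  rw [scalingFactor, scalingFactor, hdαβ]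

lemma isCrystallographic_rescale_scalingFactor (hsymm : ∀ x y : V, B x y = B y x)
    (hpos : ∀ v : V, v ≠ 0 → 0 < B v v) (hRS : IsRootSystem B Δ) (hcrys : IsCrystallographic B Δ)
    (hd : ∀ α ∈ Δ, ∀ β ∈ Δ, (d_ α : ℚ) * B β β = d_ β * B α α) (hr : 0 < r) :
    IsCrystallographic B (rescale (scalingFactor r d_) '' Δ) := by
  rintro _ ⟨α, hα, rfl⟩ _ ⟨β, hβ, rfl⟩
  have hαα := (hRS.pairing_self_pos hpos hα).ne'
  have hββ := (hRS.pairing_self_pos hpos hβ).ne'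
  obtain ⟨n, hn⟩ := hcrys α hα β hβ
  obtain ⟨m, hm⟩ := hcrys β hβ α hα
  have hnm : (d_ α : ℤ) * n = d_ β * m := by
    have hβα := pairing_coroot_mul_self B hαα β
    have hαβ := pairing_coroot_mul_self B hββ α
    rw [hn] at hβα
    rw [hm, hsymm α β] at hαβ
    have : ((d_ α : ℚ) * n - d_ β * m) * B β β = 0 := by
      linear_combination (n : ℚ) * hd α hα β hβ + (d_ β : ℚ) * (hβα - hαβ)
    exact_mod_cast sub_eq_zero.mp ((mul_eq_zero.mp this).resolve_right hββ)
  obtain ⟨z, hz⟩ := div_gcd_dvd_div_gcd_mul hr hnm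
  refine ⟨z, ?_⟩
  have hcα : scalingFactor r d_ α ≠ 0 := Nat.cast_ne_zero.mpr (Nat.div_gcd_pos_of_pos_left _ hr).ne'
  have hzQ : scalingFactor r d_ β * n = scalingFactor r d_ α * z := by
    have := congrArg (fun x : ℤ => (x : ℚ)) hz
    simp only [Int.cast_mul, Int.cast_natCast] at this
    exact this
  rw [pairing_coroot_rescale hcα hαα, hn]
  field_simp
  linear_combination hzQ

end ScalingFactor

theorem statement0_general
    {V : Type*} [AddCommGroup V] [Module ℚ V]
    (B : V →ₗ[ℚ] V →ₗ[ℚ] ℚ)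
    (hsymm : ∀ x y : V, B x y = B y x)
    (hpos : ∀ v : V, v ≠ 0 → 0 < B v v)
    (Δ : Set V) (hRS : IsRootSystem B Δ) (hred : IsReduced Δ)
    (hcrys : IsCrystallographic B Δ)
    (Pi : Set V) (hbase : IsBase Δ Pi)
    (d_ : V → ℕ)
    (hd : ∀ α ∈ Δ, ∀ β : V, IsShort B Δ β → B α α = (d_ α : ℚ) * B β β)
    (r : ℕ) (hr : 0 < r)
    (f : V → V) (hf : ∀ α : V, f α = ((r / Nat.gcd r (d_ α) : ℕ) : ℚ) • α) :
    IsRootSystem B (f '' Δ) ∧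
    IsReduced (f '' Δ) ∧
    IsCrystallographic B (f '' Δ) ∧
    weylGroup B (f '' Δ) = weylGroup B Δ ∧
    IsBase (f '' Δ) (f '' Pi) ∧
    positiveRoots (f '' Δ) (f '' Pi) = f '' positiveRoots Δ Pi := by
  have hd_ratio : ∀ α ∈ Δ, ∀ β ∈ Δ, (d_ α : ℚ) * B β β = d_ β * B α α := by
    intro α hα β hβ
    obtain ⟨β₀, hβ₀, hmin⟩ := Set.exists_min_image Δ (fun γ => B γ γ) hRS.1 ⟨α, hα⟩
    rw [hd α hα β₀ ⟨hβ₀, hmin⟩, hd β hβ β₀ ⟨hβ₀, hmin⟩]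
    ring
  obtain rfl : f = rescale (scalingFactor r d_) := funext hf
  have hc : ∀ α ∈ Δ, 0 < scalingFactor r d_ α := fun α _ =>
    Nat.cast_pos.mpr (Nat.div_gcd_pos_of_pos_left _ hr)
  have hc_len : ∀ α ∈ Δ, ∀ β ∈ Δ, B α α = B β β → scalingFactor r d_ α = scalingFactor r d_ β :=
    fun α hα β hβ => scalingFactor_eq_of_norm_eq hpos hRS hd_ratio hα hβ
  have hcrys' := isCrystallographic_rescale_scalingFactor hsymm hpos hRS hcrys hd_ratio hr
  exact ⟨isRootSystem_rescale hsymm hpos hRS hc hc_len, isReduced_rescale hred hc hc_len, hcrys',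
    weylGroup_rescale hpos hRS hc, isBase_rescale hsymm hpos hRS hred hbase hc hc_len hcrys',
    positiveRoots_rescale hsymm hpos hRS hred hbase hc hc_len hcrys'⟩

theorem statement0
    {V : Type*} [AddCommGroup V] [Module ℚ V] [FiniteDimensional ℚ V]
    (B : V →ₗ[ℚ] V →ₗ[ℚ] ℚ)
    (hsymm : ∀ x y : V, B x y = B y x)
    (hpos : ∀ v : V, v ≠ 0 → 0 < B v v)
    (Δ : Set V) (hRS : IsRootSystem B Δ) (hred : IsReduced Δ)
    (hcrys : IsCrystallographic B Δ) (hirr : IsIrreducible B Δ)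
    (Pi : Set V) (hbase : IsBase Δ Pi)
    (d_ : V → ℕ)
    (hd : ∀ α ∈ Δ, ∀ β : V, IsShort B Δ β → B α α = (d_ α : ℚ) * B β β)
    (r : ℕ) (hr : 0 < r)
    (f : V → V) (hf : ∀ α : V, f α = ((r / Nat.gcd r (d_ α) : ℕ) : ℚ) • α) :
    IsRootSystem B (f '' Δ) ∧
    IsReduced (f '' Δ) ∧
    IsCrystallographic B (f '' Δ) ∧
    weylGroup B (f '' Δ) = weylGroup B Δ ∧
    IsBase (f '' Δ) (f '' Pi) ∧
    positiveRoots (f '' Δ) (f '' Pi) = f '' positiveRoots Δ Pi :=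
  statement0_general B hsymm hpos Δ hRS hred hcrys Pi hbase d_ hd r hr f hf

end ZetaCenter
end

section
/- Let P₁ = {μ ∈ V : (μ, α^∨) ∈ ℤ for all short roots α ∈ Δ} and Q₁^∨ = Σ_{α ∈ Δ, α short} ℤ α^∨. Then the indices [P : P ∩ 2P₁] and [Q₁^∨ : Q₁^∨ ∩ 2Q^∨] are finite and equal: [P : P ∩ 2P₁] = [Q₁^∨ : Q₁^∨ ∩ 2Q^∨]. -/
open scoped Pointwise

/-!
Reduce the pairing `(λ, y) ↦ (λ, y)` modulo 2 on `P × Q₁^∨`. Its left kernel is `P ∩ 2P₁`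
(test against the short coroots), and its right kernel is `Q₁^∨ ∩ 2Q^∨`, because `Q^∨` is the
`ℤ`-dual of `P` (double duality for the lattice `Q^∨`). The reduced pairing is perfect between
the elementary abelian 2-groups `P / (P ∩ 2P₁)` and `Q₁^∨ / (Q₁^∨ ∩ 2Q^∨)`, which are finite
because `Q₁^∨` is finitely generated; each embeds in the dual of the other, so they have the
same order.
-/

theorem Nat.card_addMonoidHom_zmod {p : ℕ} [Fact p.Prime] (G : Type*) [AddCommGroup G]
    [Module (ZMod p) G] [Finite G] : Nat.card (G →+ ZMod p) = Nat.card G := by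
  have : Module.Finite (ZMod p) G := Module.Finite.of_finite
  rw [Nat.card_congr (AddMonoidHom.toZModLinearMapEquiv p).toEquiv,
    Module.natCard_eq_pow_finrank (K := ZMod p),
    Module.natCard_eq_pow_finrank (K := ZMod p) (V := G), Subspace.dual_finrank_eq]

namespace AddMonoidHom

variable {p : ℕ} {A B : Type*} [AddCommGroup A] [AddCommGroup B]

theorem nsmul_mem_ker_flip (f : A →+ B →+ ZMod p) (b : B) : p • b ∈ f.flip.ker := by
  rw [mem_ker, map_nsmul]
  ext a
  simp

theorem finite_quotient_ker_flip [NeZero p] [AddGroup.FG B] (f : A →+ B →+ ZMod p) :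
    Finite (B ⧸ f.flip.ker) := by
  have : AddGroup.FG (B ⧸ f.flip.ker) :=
    AddGroup.fg_of_surjective (QuotientAddGroup.mk'_surjective f.flip.ker)
  refine AddCommGroup.finite_of_fg_isAddTorsion _ fun q => ?_
  induction q using QuotientAddGroup.induction_on with
  | H b =>
    refine isOfFinAddOrder_iff_nsmul_eq_zero.mpr ⟨p, NeZero.pos p, ?_⟩
    rw [← QuotientAddGroup.mk_nsmul, QuotientAddGroup.eq_zero_iff]
    exact nsmul_mem_ker_flip f b

variable [Fact p.Prime]

theorem index_ker_le_index_ker_flip (f : A →+ B →+ ZMod p) [Finite (B ⧸ f.flip.ker)] :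
    f.ker.index ≠ 0 ∧ f.ker.index ≤ f.flip.ker.index := by
  let g : A →+ (B ⧸ f.flip.ker →+ ZMod p) := (QuotientAddGroup.kerLift f.flip).flip
  have hker : g.ker = f.ker := by
    ext a
    simp only [g, mem_ker, AddMonoidHom.ext_iff, QuotientAddGroup.mk_surjective.forall,
      flip_apply, QuotientAddGroup.kerLift_mk, zero_apply]
  let _ : Module (ZMod p) (B ⧸ f.flip.ker) := QuotientAddGroup.zmodModule (nsmul_mem_ker_flip f)
  have : Finite (B ⧸ f.flip.ker →+ ZMod p) := Finite.of_injective _ DFunLike.coe_injective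
  rw [← hker, AddSubgroup.index_ker, AddSubgroup.index_eq_card f.flip.ker,
    ← Nat.card_addMonoidHom_zmod (p := p) (B ⧸ f.flip.ker)]
  exact ⟨Nat.card_pos.ne', Finite.card_subtype_le _⟩

theorem index_ker_eq_index_ker_flip [AddGroup.FG B] (f : A →+ B →+ ZMod p) :
    f.ker.index ≠ 0 ∧ f.flip.ker.index ≠ 0 ∧ f.ker.index = f.flip.ker.index := by
  have := finite_quotient_ker_flip f
  obtain ⟨hA, hAB⟩ := index_ker_le_index_ker_flip f
  have : f.flip.flip.ker.FiniteIndex := ⟨hA⟩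
  obtain ⟨hB, hBA⟩ := index_ker_le_index_ker_flip f.flip
  exact ⟨hA, hB, hAB.antisymm hBA⟩

end AddMonoidHom

theorem Submodule.mem_one_int_iff {q : ℚ} : q ∈ (1 : Submodule ℤ ℚ) ↔ ∃ n : ℤ, q = n := by
  simp [Submodule.mem_one, eq_comm]

theorem LinearMap.BilinForm.mem_dualSubmodule_span_iff {R S M : Type*} [CommRing R]
    [Field S] [AddCommGroup M] [Algebra R S] [Module R M] [Module S M] [IsScalarTower R S M]
    (B : LinearMap.BilinForm S M) {s : Set M} {x : M} :
    x ∈ B.dualSubmodule (Submodule.span R s) ↔ ∀ y ∈ s, B x y ∈ (1 : Submodule R S) :=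
  Submodule.span_le (p := (1 : Submodule R S).comap ((B x).restrictScalars R))

theorem Submodule.IsLattice.span_range_extendOfIsLattice {R K V : Type*} [CommRing R]
    [Field K] [Algebra R K] [IsFractionRing R K] [AddCommGroup V] [Module K V] [Module R V]
    [IsScalarTower R K V] {κ : Type*} {M : Submodule R V} [M.IsLattice K]
    (b : Module.Basis κ R M) :
    Submodule.span R (Set.range (b.extendOfIsLattice K)) = M := by
  have : ⇑(b.extendOfIsLattice K) = M.subtype ∘ b := funext (b.extendOfIsLattice_apply K)
  rw [this, Set.range_comp, ← Submodule.map_span, b.span_eq, Submodule.map_top,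
    Submodule.range_subtype]

theorem LinearMap.BilinForm.flip_dualSubmodule_dualSubmodule_of_isLattice
    {R K V : Type*} [CommRing R] [IsDomain R] [IsPrincipalIdealRing R] [Field K] [Algebra R K]
    [IsFractionRing R K] [AddCommGroup V] [Module K V] [Module R V] [IsScalarTower R K V]
    (B : LinearMap.BilinForm K V) (hB : B.Nondegenerate) (M : Submodule R V) [M.IsLattice K] :
    B.flip.dualSubmodule (B.dualSubmodule M) = M := by
  let b := Module.Free.chooseBasis R M
  rw [← Submodule.IsLattice.span_range_extendOfIsLattice b]
  exact B.dualSubmodule_flip_dualSubmodule_of_basis hB _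

namespace ZetaCenter

open LinearMap (BilinForm)

variable {V : Type*} [AddCommGroup V] [Module ℚ V]

section IntegralPairing

variable (B : V →ₗ[ℚ] V →ₗ[ℚ] ℚ)
  {K₁ K₂ : AddSubgroup V} (hint : ∀ x ∈ K₁, ∀ y ∈ K₂, ∃ n : ℤ, B x y = n)

-- `⌊B x y⌋` is `B x y` itself, read as an integer thanks to `hint`.
noncomputable def integralPairing : K₁ →+ K₂ →+ ℤ :=
  AddMonoidHom.mk'
    (fun x => AddMonoidHom.mk' (fun y => ⌊B x y⌋) fun y y' => by
      obtain ⟨m, hm⟩ := hint x x.2 y y.2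
      obtain ⟨n, hn⟩ := hint x x.2 y' y'.2
      simp only [AddSubgroup.coe_add, map_add, hm, hn, ← Int.cast_add, Int.floor_intCast])
    fun x x' => by
      ext y
      obtain ⟨m, hm⟩ := hint x x.2 y y.2
      obtain ⟨n, hn⟩ := hint x' x'.2 y y.2
      simp only [AddMonoidHom.mk'_apply, AddMonoidHom.add_apply, AddSubgroup.coe_add, map_add,
        LinearMap.add_apply, hm, hn, ← Int.cast_add, Int.floor_intCast]

theorem integralPairing_apply (x : K₁) (y : K₂) : (integralPairing B hint x y : ℚ) = B x y := by
  obtain ⟨n, hn⟩ := hint x x.2 y y.2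
  simp [integralPairing, hn]

variable {B hint} (p : ℕ)

theorem integralPairing_cast_eq_zero_iff (x : K₁) (y : K₂) :
    ((integralPairing B hint x y : ℤ) : ZMod p) = 0 ↔ ∃ n : ℤ, B x y = p * n := by
  rw [ZMod.intCast_zmod_eq_zero_iff_dvd, ← integralPairing_apply B hint x y]
  constructor
  · rintro ⟨n, hn⟩
    exact ⟨n, by rw [hn]; push_cast; ring⟩
  · rintro ⟨n, hn⟩
    exact ⟨n, by exact_mod_cast hn⟩

theorem mem_ker_integralPairing_mod_iff (x : K₁) :
    x ∈ ((integralPairing B hint).compr₂ (Int.castAddHom (ZMod p))).ker ↔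
      ∀ y ∈ K₂, ∃ n : ℤ, B x y = p * n := by
  simp only [AddMonoidHom.mem_ker, AddMonoidHom.ext_iff, AddMonoidHom.compr₂_apply,
    Int.coe_castAddHom, AddMonoidHom.zero_apply, integralPairing_cast_eq_zero_iff, Subtype.forall]

theorem mem_ker_flip_integralPairing_mod_iff (y : K₂) :
    y ∈ ((integralPairing B hint).compr₂ (Int.castAddHom (ZMod p))).flip.ker ↔
      ∀ x ∈ K₁, ∃ n : ℤ, B x y = p * n := by
  simp only [AddMonoidHom.mem_ker, AddMonoidHom.ext_iff, AddMonoidHom.flip_apply,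
    AddMonoidHom.compr₂_apply, Int.coe_castAddHom, AddMonoidHom.zero_apply,
    integralPairing_cast_eq_zero_iff, Subtype.forall]

end IntegralPairing

theorem relIndex_eq_relIndex_of_integral_pairing (p : ℕ) [Fact p.Prime]
    (B : V →ₗ[ℚ] V →ₗ[ℚ] ℚ) {K₁ K₂ H₁ H₂ : AddSubgroup V} [AddGroup.FG K₂]
    (hint : ∀ x ∈ K₁, ∀ y ∈ K₂, ∃ n : ℤ, B x y = n)
    (hH₁ : ∀ x ∈ K₁, x ∈ H₁ ↔ ∀ y ∈ K₂, ∃ n : ℤ, B x y = p * n)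
    (hH₂ : ∀ y ∈ K₂, y ∈ H₂ ↔ ∀ x ∈ K₁, ∃ n : ℤ, B x y = p * n) :
    H₁.relIndex K₁ ≠ 0 ∧ H₂.relIndex K₂ ≠ 0 ∧ H₁.relIndex K₁ = H₂.relIndex K₂ := by
  set f := (integralPairing B hint).compr₂ (Int.castAddHom (ZMod p))
  have hker₁ : H₁.addSubgroupOf K₁ = f.ker := by
    ext x
    rw [AddSubgroup.mem_addSubgroupOf, hH₁ x x.2, mem_ker_integralPairing_mod_iff]
  have hker₂ : H₂.addSubgroupOf K₂ = f.flip.ker := by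
    ext y
    rw [AddSubgroup.mem_addSubgroupOf, hH₂ y y.2, mem_ker_flip_integralPairing_mod_iff]
  simpa only [AddSubgroup.relIndex, hker₁, hker₂] using
    AddMonoidHom.index_ker_eq_index_ker_flip f

theorem nondegenerate_of_pos {B : V →ₗ[ℚ] V →ₗ[ℚ] ℚ} (hpos : ∀ v : V, v ≠ 0 → 0 < B v v) :
    B.Nondegenerate :=
  ⟨fun x hx => by_contra fun h => (hpos x h).ne' (hx x),
    fun y hy => by_contra fun h => (hpos y h).ne' (hy y)⟩

theorem span_rat_coroot_image {B : V →ₗ[ℚ] V →ₗ[ℚ] ℚ} (hpos : ∀ v : V, v ≠ 0 → 0 < B v v)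
    {Δ : Set V} (h0 : (0 : V) ∉ Δ) :
    Submodule.span ℚ (coroot B '' Δ) = Submodule.span ℚ Δ := by
  apply le_antisymm <;> rw [Submodule.span_le]
  · rintro _ ⟨α, hα, rfl⟩
    exact Submodule.smul_mem _ _ (Submodule.subset_span hα)
  · intro α hα
    have hBα : B α α ≠ 0 := (hpos α (ne_of_mem_of_not_mem hα h0)).ne'
    have : α = (B α α / 2) • coroot B α := by
      rw [coroot, smul_smul, div_mul_div_comm, mul_comm, div_self (by positivity), one_smul]
    rw [this]
    exact Submodule.smul_mem _ _ (Submodule.subset_span ⟨α, hα, rfl⟩)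

theorem scaledWeightLattice_one_eq (B : V →ₗ[ℚ] V →ₗ[ℚ] ℚ) (S : Set V) :
    scaledWeightLattice B S (fun _ => 1) =
      (BilinForm.dualSubmodule B (Submodule.span ℤ (coroot B '' S))).toAddSubgroup := by
  ext x
  change (∀ α ∈ S, ∃ n : ℤ, B x (coroot B α) = 1 * n) ↔ _
  simp only [one_mul, Submodule.mem_toAddSubgroup, BilinForm.mem_dualSubmodule_span_iff,
    Set.forall_mem_image, Submodule.mem_one_int_iff]

theorem corootLattice_eq_flip_dualSubmodule {B : V →ₗ[ℚ] V →ₗ[ℚ] ℚ}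
    (hpos : ∀ v : V, v ≠ 0 → 0 < B v v) {Δ : Set V} (hfin : Δ.Finite) (h0 : (0 : V) ∉ Δ)
    (hspan : Submodule.span ℚ Δ = ⊤) :
    corootLattice B Δ =
      (BilinForm.dualSubmodule (BilinForm.flip B)
        (BilinForm.dualSubmodule B (Submodule.span ℤ (coroot B '' Δ)))).toAddSubgroup := by
  have : (Submodule.span ℤ (coroot B '' Δ)).IsLattice ℚ :=
    ⟨Submodule.fg_span (hfin.image _), by
      rw [Submodule.span_span_of_tower, span_rat_coroot_image hpos h0, hspan]⟩
  rw [BilinForm.flip_dualSubmodule_dualSubmodule_of_isLattice B (nondegenerate_of_pos hpos)]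
  exact (Submodule.span_int_eq_addSubgroupClosure _).symm

theorem mem_smul_dualSubmodule_iff (B : V →ₗ[ℚ] V →ₗ[ℚ] ℚ) (N : Submodule ℤ V) {c : ℚ}
    (hc : c ≠ 0) {x : V} :
    x ∈ c • (BilinForm.dualSubmodule B N).toAddSubgroup ↔ ∀ y ∈ N, ∃ n : ℤ, B x y = c * n := by
  rw [← SetLike.mem_coe, AddSubgroup.coe_pointwise_smul, Set.mem_smul_set_iff_inv_smul_mem₀ hc]
  simp only [SetLike.mem_coe, Submodule.mem_toAddSubgroup, BilinForm.mem_dualSubmodule,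
    Submodule.mem_one_int_iff, map_smul, LinearMap.smul_apply, smul_eq_mul,
    inv_mul_eq_iff_eq_mul₀ hc]

theorem statement3_general
    {V : Type*} [AddCommGroup V] [Module ℚ V]
    (B : V →ₗ[ℚ] V →ₗ[ℚ] ℚ)
    (hpos : ∀ v : V, v ≠ 0 → 0 < B v v)
    (Δ : Set V) (hRS : IsRootSystem B Δ) :
    ((2 : ℚ) • scaledWeightLattice B {β | IsShort B Δ β} (fun _ => 1)).relIndex
        (weightLattice B Δ) ≠ 0 ∧
    ((2 : ℚ) • corootLattice B Δ).relIndex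
        (AddSubgroup.closure (coroot B '' {β | IsShort B Δ β})) ≠ 0 ∧
    ((2 : ℚ) • scaledWeightLattice B {β | IsShort B Δ β} (fun _ => 1)).relIndex
        (weightLattice B Δ) =
      ((2 : ℚ) • corootLattice B Δ).relIndex
        (AddSubgroup.closure (coroot B '' {β | IsShort B Δ β})) := by
  obtain ⟨hfin, h0, hspan, -⟩ := hRS
  set S := {β | IsShort B Δ β}
  have hSΔ : S ⊆ Δ := fun _ hβ => hβ.1
  have : Finite (coroot B '' S) := ((hfin.subset hSΔ).image _).to_subtype
  have hP : weightLattice B Δ = _ := scaledWeightLattice_one_eq B Δ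
  have hQ₁ : ∀ {y}, y ∈ AddSubgroup.closure (coroot B '' S) ↔
      y ∈ Submodule.span ℤ (coroot B '' S) := by
    simp [← Submodule.span_int_eq_addSubgroupClosure]
  refine relIndex_eq_relIndex_of_integral_pairing 2 B ?_ ?_ ?_
  · intro x hx y hy
    rw [hP] at hx
    exact Submodule.mem_one_int_iff.mp (hx y (Submodule.span_mono (Set.image_mono hSΔ) (hQ₁.mp hy)))
  · intro x _
    rw [scaledWeightLattice_one_eq, mem_smul_dualSubmodule_iff B _ two_ne_zero]
    simp [hQ₁]
  · intro y _
    rw [corootLattice_eq_flip_dualSubmodule hpos hfin h0 hspan,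
      mem_smul_dualSubmodule_iff _ _ two_ne_zero, hP]
    simp

/-- With `P₁ = {μ : (μ, α^∨) ∈ ℤ for all short α}` and
`Q₁^∨` the lattice generated by the short coroots, the indices `[P : P ∩ 2P₁]` and
`[Q₁^∨ : Q₁^∨ ∩ 2Q^∨]` are finite and equal. -/
theorem statement3
    {V : Type*} [AddCommGroup V] [Module ℚ V] [FiniteDimensional ℚ V]
    (B : V →ₗ[ℚ] V →ₗ[ℚ] ℚ)
    (hsymm : ∀ x y : V, B x y = B y x)
    (hpos : ∀ v : V, v ≠ 0 → 0 < B v v)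
    (Δ : Set V) (hRS : IsRootSystem B Δ) (hred : IsReduced Δ)
    (hcrys : IsCrystallographic B Δ) (hirr : IsIrreducible B Δ)
    (Pi : Set V) (hbase : IsBase Δ Pi) :
    ((2 : ℚ) • scaledWeightLattice B {β | IsShort B Δ β} (fun _ => 1)).relIndex
        (weightLattice B Δ) ≠ 0 ∧
    ((2 : ℚ) • corootLattice B Δ).relIndex
        (AddSubgroup.closure (coroot B '' {β | IsShort B Δ β})) ≠ 0 ∧
    ((2 : ℚ) • scaledWeightLattice B {β | IsShort B Δ β} (fun _ => 1)).relIndex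
        (weightLattice B Δ) =
      ((2 : ℚ) • corootLattice B Δ).relIndex
        (AddSubgroup.closure (coroot B '' {β | IsShort B Δ β})) :=
  statement3_general B hpos Δ hRS

end ZetaCenter
end
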